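/- arXiv:2605.05325 — 4 statements merged into one kernel-verified Lean document; each statement's English description precedes it below -/
import Mathlib

section
/- For every positive integer m and every real number u ≥ 0, the series ∑_{k=0}^{∞} u^k · (k‼) / ((⌊k/(4m)⌋)!)^(4m) converges, i.e., the function k ↦ u^k · (k‼) / ((⌊k/(4m)⌋)!)^(4m) from ℕ to ℝ is summable. -/
open Nat

/-- `k‼ ≤ 2^k * (k/2 + 1)!` -/
lemma aux_doubleFactorial_le (k : ℕ) : k‼ ≤ 2 ^ k * (k / 2 + 1)! := by
  induction k using Nat.strong_induction_on with
  | _ k ih =>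
    match k with
    | 0 => simp [Nat.doubleFactorial]
    | 1 => simp [Nat.doubleFactorial, Nat.factorial]
    | (n + 2) =>
      have h := ih n (by omega)
      rw [Nat.doubleFactorial_add_two]
      have h2 : (n + 2) / 2 = n / 2 + 1 := by omega
      rw [h2, Nat.factorial_succ]
      calc (n + 2) * n‼ ≤ (n + 2) * (2 ^ n * (n / 2 + 1)!) := by
            exact Nat.mul_le_mul_left _ h
        _ ≤ (4 * (n / 2 + 1 + 1)) * (2 ^ n * (n / 2 + 1)!) := by
            have : n + 2 ≤ 4 * (n / 2 + 1 + 1) := by omega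
            exact Nat.mul_le_mul_right _ this
        _ = 2 ^ (n + 2) * ((n / 2 + 1 + 1) * (n / 2 + 1)!) := by ring
  
/-- `(k/2)! * (k/2 + 1)! ≤ (k+1)!` -/
lemma aux_half_factorials (k : ℕ) : (k / 2)! * (k / 2 + 1)! ≤ (k + 1)! := by
  have hdvd : (k / 2)! * (k / 2 + 1)! ∣ (k / 2 + (k / 2 + 1))! :=
    Nat.factorial_mul_factorial_dvd_factorial_add _ _
  have h1 : (k / 2 + (k / 2 + 1))! ≤ (k + 1)! := by
    apply Nat.factorial_le; omega
  exact le_trans (Nat.le_of_dvd (Nat.factorial_pos _) hdvd) h1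

/-- `a! ≤ b! * a^(a-b)` for `b ≤ a`. -/
lemma aux_factorial_le_pow (a b : ℕ) (h : b ≤ a) : a ! ≤ b ! * a ^ (a - b) := by
  induction a with
  | zero => interval_cases b; simp
  | succ a ih =>
    rcases Nat.eq_or_lt_of_le h with h' | h'
    · rw [← h']; simp
    · have hb : b ≤ a := by omega
      have := ih hb
      have hsub : a + 1 - b = (a - b) + 1 := by omega
      rw [Nat.factorial_succ, hsub, pow_succ]
      calc (a + 1) * a ! ≤ (a + 1) * (b ! * a ^ (a - b)) := Nat.mul_le_mul_left _ this
        _ ≤ (a + 1) * (b ! * (a + 1) ^ (a - b)) := by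
            apply Nat.mul_le_mul_left
            apply Nat.mul_le_mul_left
            exact Nat.pow_le_pow_left (by omega) _
        _ = b ! * ((a + 1) ^ (a - b) * (a + 1)) := by ring

/-- `(n*q)! ≤ (q!)^n * 2^(n*(n*q))` -/
lemma aux_multinomial (n q : ℕ) : (n * q)! ≤ (q !) ^ n * 2 ^ (n * (n * q)) := by
  induction n with
  | zero => simp
  | succ n ih =>
    have hbin : (n * q + q)! = (n * q + q).choose q * q ! * (n * q)! := by
      have := Nat.choose_mul_factorial_mul_factorial (n := n * q + q) (k := q) (by omega)
      have hsub : n * q + q - q = n * q := by omega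
      rw [hsub] at this
      omega
    have hch : (n * q + q).choose q ≤ 2 ^ (n * q + q) := by
      calc (n * q + q).choose q ≤ ∑ i ∈ Finset.range (n * q + q + 1), (n * q + q).choose i := by
            apply Finset.single_le_sum (f := fun i => (n * q + q).choose i)
            · intro i _; exact Nat.zero_le _
            · simp
        _ = 2 ^ (n * q + q) := Nat.sum_range_choose _
    have hmul : (n + 1) * q = n * q + q := by ring
    rw [hmul, hbin]
    calc (n * q + q).choose q * q ! * (n * q)!
        ≤ 2 ^ (n * q + q) * q ! * ((q !) ^ n * 2 ^ (n * (n * q))) :=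
          Nat.mul_le_mul (Nat.mul_le_mul_right _ hch) ih
      _ = (q !) ^ (n + 1) * (2 ^ (n * q + q) * 2 ^ (n * (n * q))) := by ring
      _ ≤ (q !) ^ (n + 1) * 2 ^ ((n + 1) * (n * q + q)) := by
          apply Nat.mul_le_mul_left
          rw [← pow_add]
          apply Nat.pow_le_pow_right (by norm_num)
          nlinarith

/-- Main natural-number estimate. -/
lemma aux_main_nat (n k : ℕ) (hn : 0 < n) :
    k‼ * (k / 2)! ≤ 2 ^ ((2 * n + 1) * k) * ((k / n)!) ^ n := by
  set q := k / n with hq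
  have hdm : n * q + k % n = k := Nat.div_add_mod k n
  have hml : k % n < n := Nat.mod_lt k hn
  have hnq : n * q ≤ k := by omega
  have hk1 : k + 1 - n * q ≤ n := by
    set t := n * q with ht
    set r := k % n with hr
    omega
  have h1 : k‼ * (k / 2)! ≤ 2 ^ k * (k + 1)! := by
    calc k‼ * (k / 2)! ≤ (2 ^ k * (k / 2 + 1)!) * (k / 2)! :=
          Nat.mul_le_mul_right _ (aux_doubleFactorial_le k)
      _ = 2 ^ k * ((k / 2)! * (k / 2 + 1)!) := by ring
      _ ≤ 2 ^ k * (k + 1)! := Nat.mul_le_mul_left _ (aux_half_factorials k)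
  have h2 : (k + 1)! ≤ (n * q)! * (k + 1) ^ (k + 1 - n * q) :=
    aux_factorial_le_pow (k + 1) (n * q) (by omega)
  have h3 : (k + 1) ^ (k + 1 - n * q) ≤ 2 ^ (n * k) := by
    have hb : k + 1 ≤ 2 ^ k := Nat.lt_two_pow_self
    calc (k + 1) ^ (k + 1 - n * q) ≤ (2 ^ k) ^ (k + 1 - n * q) :=
          Nat.pow_le_pow_left hb _
      _ ≤ (2 ^ k) ^ n := Nat.pow_le_pow_right (Nat.one_le_two_pow) hk1
      _ = 2 ^ (n * k) := by rw [← pow_mul, Nat.mul_comm]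
  have h4 : (n * q)! ≤ (q !) ^ n * 2 ^ (n * k) := by
    refine (aux_multinomial n q).trans ?_
    apply Nat.mul_le_mul_left
    exact Nat.pow_le_pow_right (by norm_num) (Nat.mul_le_mul_left n hnq)
  calc k‼ * (k / 2)! ≤ 2 ^ k * (k + 1)! := h1
    _ ≤ 2 ^ k * ((n * q)! * (k + 1) ^ (k + 1 - n * q)) := Nat.mul_le_mul_left _ h2
    _ ≤ 2 ^ k * (((q !) ^ n * 2 ^ (n * k)) * 2 ^ (n * k)) :=
        Nat.mul_le_mul_left _ (Nat.mul_le_mul h4 h3)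
    _ = 2 ^ ((2 * n + 1) * k) * (q !) ^ n := by
        rw [show (2 * n + 1) * k = k + (n * k + n * k) by ring, pow_add, pow_add]; ring
    _ = 2 ^ ((2 * n + 1) * k) * ((k / n)!) ^ n := by rw [hq]

/-- Summability of `D^k / (k/2)!`. -/
lemma aux_summable_half (D : ℝ) (hD : 0 ≤ D) :
    Summable (fun k : ℕ => D ^ k / ((k / 2)! : ℝ)) := by
  apply Summable.even_add_odd
  · have : Summable (fun j : ℕ => (D ^ 2) ^ j / (j ! : ℝ)) :=
      Real.summable_pow_div_factorial (D ^ 2)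
    refine this.congr fun j => ?_
    rw [Nat.mul_div_cancel_left j (by norm_num), ← pow_mul]
  · have : Summable (fun j : ℕ => D * ((D ^ 2) ^ j / (j ! : ℝ))) :=
      (Real.summable_pow_div_factorial (D ^ 2)).mul_left D
    refine this.congr fun j => ?_
    have : (2 * j + 1) / 2 = j := by omega
    rw [this, ← pow_mul, pow_succ, mul_comm (D ^ (2 * j)) D, mul_div_assoc]

/-- For every positive integer `m` and real `u ≥ 0`, the series
`∑ₖ u^k · k‼ / ((⌊k/(4m)⌋)!)^(4m)` converges. -/
theorem doubleFactorial_series_summable (m : ℕ) (hm : 0 < m) (u : ℝ) (hu : 0 ≤ u) :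
    Summable (fun k : ℕ =>
      u ^ k * (Nat.doubleFactorial k : ℝ) / ((Nat.factorial (k / (4 * m)) : ℝ)) ^ (4 * m)) := by
  set n := 4 * m with hn
  have hn0 : 0 < n := by omega
  set D : ℝ := u * 2 ^ (2 * n + 1) with hD
  have hD0 : 0 ≤ D := by positivity
  apply Summable.of_nonneg_of_le (f := fun k : ℕ => D ^ k / ((k / 2)! : ℝ))
  · intro k; positivity
  · intro k
    rw [div_le_div_iff₀ (by positivity) (by positivity)]
    have hnat := aux_main_nat n k hn0
    have hcast : (k‼ : ℝ) * ((k / 2)! : ℝ) ≤ (2 : ℝ) ^ ((2 * n + 1) * k) * (((k / n)! : ℝ)) ^ n := by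
      exact_mod_cast hnat
    calc u ^ k * (k‼ : ℝ) * ((k / 2)! : ℝ)
        = u ^ k * ((k‼ : ℝ) * ((k / 2)! : ℝ)) := by ring
      _ ≤ u ^ k * ((2 : ℝ) ^ ((2 * n + 1) * k) * (((k / n)! : ℝ)) ^ n) := by
          apply mul_le_mul_of_nonneg_left hcast (by positivity)
      _ = D ^ k * (((k / n)! : ℝ)) ^ n := by
          rw [hD, mul_pow, pow_mul]; ring
  · exact aux_summable_half D hD0
end

section
/- There exists a real constant C ≥ 1 such that for all real numbers E > 0, u ≥ 0, v ≥ 0, and all real x with 0 ≤ x and x·√E ≤ 1, one has ∑_{k=3}^{∞} x^k · (k‼) / ((⌊k/8⌋)!)^8 · (E^((k−1)/2)·u + E^((k−2)/2)·v) ≤ C · x^3 · (E·u + √E·v). -/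
/-!
With `y = x√E ≤ 1`, the `k`-th term is `c_{k+3} y^k · x³(E u + √E v)` where
`c_n = n‼ / (⌊n/8⌋!)^8`, so the sum is at most `(∑ c_n) · x³(E u + √E v)`.
The coefficients are summable: `n‼² ≤ (n+1)!` and `n! ≤ 2^{10n} (⌊n/8⌋!)^8` give
`c_n² ≤ 2^{21n} / n!`, and then `c_n ≤ 2ⁿ c_n² + 2⁻ⁿ`.
-/

open scoped Nat

theorem Nat.doubleFactorial_le_doubleFactorial_succ : ∀ n : ℕ, n‼ ≤ (n + 1)‼
  | 0 => le_rfl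
  | 1 => by decide
  | n + 2 => by
    rw [Nat.doubleFactorial_add_two, show n + 2 + 1 = n + 1 + 2 from rfl,
      Nat.doubleFactorial_add_two]
    exact Nat.mul_le_mul (by omega) (doubleFactorial_le_doubleFactorial_succ n)

theorem Nat.doubleFactorial_sq_le_factorial_succ (n : ℕ) : n‼ ^ 2 ≤ (n + 1)! := by
  rw [sq, Nat.factorial_eq_mul_doubleFactorial]
  exact Nat.mul_le_mul_right _ (doubleFactorial_le_doubleFactorial_succ n)

theorem Nat.factorial_le_pow_mul_factorial_sub {n k : ℕ} (hk : k ≤ n) :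
    n ! ≤ n ^ k * (n - k)! := by
  rw [← Nat.factorial_mul_descFactorial hk, mul_comm]
  exact Nat.mul_le_mul_right _ (descFactorial_le_pow n k)

theorem Nat.factorial_mul_le_pow_mul_factorial_pow (m q : ℕ) :
    (m * q)! ≤ m ^ (m * q) * q ! ^ m := by
  induction q with
  | zero => simp
  | succ q ih =>
    calc (m * (q + 1))! ≤ (m * (q + 1)) ^ m * (m * q)! := by
          simpa [mul_add] using
            factorial_le_pow_mul_factorial_sub (n := m * (q + 1)) (k := m) (by nlinarith)
      _ ≤ (m * (q + 1)) ^ m * (m ^ (m * q) * q ! ^ m) := Nat.mul_le_mul_left _ ih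
      _ = m ^ (m * (q + 1)) * (q + 1)! ^ m := by rw [factorial_succ, mul_pow, mul_pow]; ring

theorem Nat.factorial_le_pow_mul_factorial_div_eight_pow (n : ℕ) :
    n ! ≤ 2 ^ (10 * n) * (n / 8)! ^ 8 := by
  set q := n / 8
  have hq : 8 * q ≤ n := Nat.mul_div_le n 8
  calc n ! ≤ n ^ (n - 8 * q) * (8 * q)! := by
        simpa [Nat.sub_sub_self hq] using factorial_le_pow_mul_factorial_sub (sub_le n (8 * q))
    _ ≤ (2 ^ n) ^ 7 * (8 ^ (8 * q) * q ! ^ 8) := by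
        refine Nat.mul_le_mul ?_ (factorial_mul_le_pow_mul_factorial_pow 8 q)
        calc n ^ (n - 8 * q) ≤ (2 ^ n) ^ (n - 8 * q) :=
              Nat.pow_le_pow_left Nat.lt_two_pow_self.le _
          _ ≤ (2 ^ n) ^ 7 := Nat.pow_le_pow_right (Nat.two_pow_pos n) (by omega)
    _ ≤ (2 ^ n) ^ 7 * (2 ^ (3 * n) * q ! ^ 8) := by
        rw [show 8 ^ (8 * q) = 2 ^ (3 * (8 * q)) by rw [pow_mul 2 3]; rfl]
        gcongr
        · norm_num
    _ = 2 ^ (10 * n) * q ! ^ 8 := by ring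

theorem Nat.doubleFactorial_sq_mul_factorial_le (n : ℕ) :
    n‼ ^ 2 * n ! ≤ 2 ^ (21 * n) * ((n / 8)! ^ 8) ^ 2 := by
  calc n‼ ^ 2 * n ! ≤ (n + 1) * n ! ^ 2 := by
        rw [sq (n !), ← mul_assoc, ← factorial_succ]
        exact Nat.mul_le_mul_right _ (doubleFactorial_sq_le_factorial_succ n)
    _ ≤ 2 ^ n * (2 ^ (10 * n) * (n / 8)! ^ 8) ^ 2 := by
        gcongr
        · exact Nat.lt_two_pow_self
        · exact factorial_le_pow_mul_factorial_div_eight_pow n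
    _ = 2 ^ (21 * n) * ((n / 8)! ^ 8) ^ 2 := by ring

theorem summable_of_sq_le_pow_div_factorial {a : ℕ → ℝ} {c : ℝ} (ha : ∀ n, 0 ≤ a n)
    (h : ∀ n, a n ^ 2 ≤ c ^ n / n !) : Summable a := by
  refine Summable.of_nonneg_of_le ha (fun n => ?_)
    ((Real.summable_pow_div_factorial (2 * c)).add summable_geometric_two)
  -- `2 a ≤ 2ⁿ a² + 2⁻ⁿ` is AM-GM
  have amgm : 0 ≤ (2 ^ n)⁻¹ * (2 ^ n * a n - 1) ^ 2 := by positivity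
  calc a n ≤ 2 ^ n * a n ^ 2 + (1 / 2) ^ n := by
        rw [one_div_pow, one_div]
        have : (2 ^ n)⁻¹ * (2 ^ n * a n - 1) ^ 2 = 2 ^ n * a n ^ 2 - 2 * a n + (2 ^ n)⁻¹ := by
          field_simp; ring
        nlinarith [ha n]
    _ ≤ (2 * c) ^ n / n ! + (1 / 2) ^ n := by
        rw [mul_pow, mul_div_assoc]
        gcongr
        exact h n

noncomputable def tailCoeff (n : ℕ) : ℝ :=
  n‼ / ((n / 8)! : ℝ) ^ 8

theorem tailCoeff_nonneg (n : ℕ) : 0 ≤ tailCoeff n := by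
  unfold tailCoeff; positivity

theorem tailCoeff_sq_le (n : ℕ) : tailCoeff n ^ 2 ≤ (2 ^ 21 : ℝ) ^ n / n ! := by
  rw [tailCoeff, div_pow, div_le_div_iff₀ (by positivity) (by positivity), ← pow_mul]
  exact_mod_cast Nat.doubleFactorial_sq_mul_factorial_le n

theorem summable_tailCoeff : Summable tailCoeff :=
  summable_of_sq_le_pow_div_factorial tailCoeff_nonneg tailCoeff_sq_le

theorem tsum_mul_pow_le_tsum {f : ℕ → ℝ} (hf : ∀ n, 0 ≤ f n) (hfs : Summable f) {y : ℝ}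
    (hy₀ : 0 ≤ y) (hy₁ : y ≤ 1) : ∑' n, f n * y ^ n ≤ ∑' n, f n := by
  have hle : ∀ n, f n * y ^ n ≤ f n := fun n =>
    mul_le_of_le_one_right (hf n) (pow_le_one₀ hy₀ hy₁)
  have hnonneg : ∀ n, 0 ≤ f n * y ^ n := fun n => mul_nonneg (hf n) (pow_nonneg hy₀ n)
  exact (hfs.of_nonneg_of_le hnonneg hle).tsum_le_tsum hle hfs

theorem tail_term_eq_tailCoeff_mul {E : ℝ} (hE : 0 ≤ E) (u v x : ℝ) (k : ℕ) :
    x ^ (k + 3) * ((k + 3)‼ : ℝ) / (((k + 3) / 8)! : ℝ) ^ 8 *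
        (E ^ ((((k : ℝ) + 3) - 1) / 2) * u + E ^ ((((k : ℝ) + 3) - 2) / 2) * v)
      = tailCoeff (k + 3) * (x * √E) ^ k * (x ^ 3 * (E * u + √E * v)) := by
  have hsqrt (m : ℕ) (r : ℝ) (hr : r = m) : E ^ (r / 2) = √E ^ m := by
    rw [Real.rpow_div_two_eq_sqrt _ hE, hr, Real.rpow_natCast]
  rw [hsqrt (k + 2) _ (by push_cast; ring), hsqrt (k + 1) _ (by push_cast; ring), tailCoeff,
    pow_succ _ (k + 1), pow_succ _ k, mul_assoc _ √E √E, Real.mul_self_sqrt hE]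
  ring

/-- Analytic core of the nonlinear-tail bound: there is a constant `C ≥ 1` such that for all
`E > 0`, `u, v ≥ 0` and all `0 ≤ x` with `x·√E ≤ 1`,
`∑_{k=3}^∞ x^k · k‼ / ((⌊k/8⌋)!)^8 · (E^((k−1)/2)·u + E^((k−2)/2)·v) ≤ C·x^3·(E·u + √E·v)`. -/
theorem nonlinear_tail_bound :
    ∃ C : ℝ, 1 ≤ C ∧ ∀ E u v x : ℝ, 0 < E → 0 ≤ u → 0 ≤ v → 0 ≤ x → x * Real.sqrt E ≤ 1 →
      (∑' k : ℕ,
        x ^ (k + 3) * (Nat.doubleFactorial (k + 3) : ℝ) /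
            ((Nat.factorial ((k + 3) / 8) : ℝ)) ^ 8 *
          (E ^ ((((k : ℝ) + 3) - 1) / 2) * u + E ^ ((((k : ℝ) + 3) - 2) / 2) * v))
        ≤ C * x ^ 3 * (E * u + Real.sqrt E * v) := by
  set S := ∑' k, tailCoeff (k + 3)
  refine ⟨max 1 S, le_max_left _ _, fun E u v x hE hu hv hx hxE => ?_⟩
  have hP : 0 ≤ x ^ 3 * (E * u + √E * v) := by positivity
  simp_rw [tail_term_eq_tailCoeff_mul hE.le, tsum_mul_right, mul_assoc (max 1 S)]
  refine mul_le_mul_of_nonneg_right ?_ hP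
  calc ∑' k, tailCoeff (k + 3) * (x * √E) ^ k ≤ S :=
        tsum_mul_pow_le_tsum (fun k => tailCoeff_nonneg _)
          ((summable_nat_add_iff 3).2 summable_tailCoeff) (by positivity) hxE
    _ ≤ max 1 S := le_max_right _ _
end

section
/- Let E > 0 and ε > 0 be real numbers, and let (a_r) and (b_r) be sequences of real numbers (indexed by r ∈ ℕ) satisfying: a₀ ≤ ε/(4√E) + ((2+√2)/4)·√E, b₀ ≤ ε/4 + ((2+√2)/4)·E, and for all r ∈ ℕ, a_{r+1} ≤ ε/(4√E) + (1/4)·(a_r + b_r/√E) and b_{r+1} ≤ ε/4 + (1/4)·(√E·a_r + b_r). Then for all r ∈ ℕ, a_r ≤ ε/(2√E) + 2^(−r)·√E and b_r ≤ ε/2 + 2^(−r)·E. -/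
/-!
Rescale the mean errors by `√E`: with `c r = √E * a r`, both recursions read
`c (r+1), b (r+1) ≤ ε/4 + (c r + b r)/4`, so `m r = max (c r) (b r)` obeys the scalar contraction
`m (r+1) ≤ ε/4 + m r / 2`, whose fixed point is `ε/2`. Hence `m r ≤ ε/2 + 2^(-r) * E`, and dividing
by `√E` gives the bound on `a r`.
-/

theorem le_add_pow_mul_of_le_add_mul {m : ℕ → ℝ} {α q L K : ℝ} (hq : 0 ≤ q) (hL : α + q * L = L)
    (h0 : m 0 ≤ L + K) (hstep : ∀ r, m (r + 1) ≤ α + q * m r) (r : ℕ) :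
    m r ≤ L + q ^ r * K := by
  induction r with
  | zero => simpa using h0
  | succ r ih =>
    calc m (r + 1) ≤ α + q * m r := hstep r
      _ ≤ α + q * (L + q ^ r * K) := by gcongr
      _ = L + q ^ (r + 1) * K := by linear_combination hL

theorem max_succ_le_of_le_add_div_four {c d : ℕ → ℝ} {α : ℝ}
    (hc : ∀ r, c (r + 1) ≤ α + (c r + d r) / 4) (hd : ∀ r, d (r + 1) ≤ α + (c r + d r) / 4)
    (r : ℕ) : max (c (r + 1)) (d (r + 1)) ≤ α + 1 / 2 * max (c r) (d r) := by
  have hsum : c r + d r ≤ 2 * max (c r) (d r) := by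
    linarith [le_max_left (c r) (d r), le_max_right (c r) (d r)]
  exact max_le (by linarith [hc r]) (by linarith [hd r])

/-- Inductive error bound for the iterative Gaussian moment extraction algorithm: if the
mean errors `a r` and covariance errors `b r` satisfy the stated initial and recursive
inequalities, then `a r ≤ ε/(2√E) + 2^(−r)·√E` and `b r ≤ ε/2 + 2^(−r)·E` for all `r`. -/
theorem iterative_error_bound (E ε : ℝ) (hE : 0 < E) (hε : 0 < ε) (a b : ℕ → ℝ)
    (ha0 : a 0 ≤ ε / (4 * Real.sqrt E) + ((2 + Real.sqrt 2) / 4) * Real.sqrt E)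
    (hb0 : b 0 ≤ ε / 4 + ((2 + Real.sqrt 2) / 4) * E)
    (ha : ∀ r : ℕ, a (r + 1) ≤ ε / (4 * Real.sqrt E) + (1 / 4) * (a r + b r / Real.sqrt E))
    (hb : ∀ r : ℕ, b (r + 1) ≤ ε / 4 + (1 / 4) * (Real.sqrt E * a r + b r)) :
    ∀ r : ℕ, a r ≤ ε / (2 * Real.sqrt E) + (2 : ℝ) ^ (-(r : ℤ)) * Real.sqrt E ∧
             b r ≤ ε / 2 + (2 : ℝ) ^ (-(r : ℤ)) * E := by
  set s := Real.sqrt E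
  have hs : 0 < s := Real.sqrt_pos.mpr hE
  have hsE : s * s = E := Real.mul_self_sqrt hE.le
  have hsa : ∀ r, s * a (r + 1) ≤ ε / 4 + (s * a r + b r) / 4 := fun r => by
    calc s * a (r + 1) ≤ s * (ε / (4 * s) + 1 / 4 * (a r + b r / s)) := by gcongr; exact ha r
      _ = ε / 4 + (s * a r + b r) / 4 := by field_simp
  have hm0 : max (s * a 0) (b 0) ≤ ε / 2 + E := by
    have hsqrt2 : Real.sqrt 2 ≤ 2 := Real.sqrt_le_iff.mpr ⟨by norm_num, by norm_num⟩
    have hcoef : (2 + Real.sqrt 2) / 4 * E ≤ E := mul_le_of_le_one_left hE.le (by linarith)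
    have hsa0 : s * a 0 ≤ ε / 4 + (2 + Real.sqrt 2) / 4 * E := by
      calc s * a 0 ≤ s * (ε / (4 * s) + (2 + Real.sqrt 2) / 4 * s) := by gcongr
        _ = ε / 4 + (2 + Real.sqrt 2) / 4 * E := by rw [← hsE]; field_simp
    exact max_le (by linarith) (by linarith)
  have hbr : ∀ r, b (r + 1) ≤ ε / 4 + (s * a r + b r) / 4 := fun r => by linarith [hb r]
  have hm := le_add_pow_mul_of_le_add_mul (m := fun r => max (s * a r) (b r))
    (α := ε / 4) (q := 1 / 2) (L := ε / 2) (by norm_num) (by ring) hm0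
    (max_succ_le_of_le_add_div_four hsa hbr)
  intro r
  have hpow : (2 : ℝ) ^ (-(r : ℤ)) = (1 / 2) ^ r := by simp [zpow_neg, zpow_natCast]
  obtain ⟨hra, hrb⟩ := max_le_iff.mp (hm r)
  rw [hpow]
  refine ⟨?_, hrb⟩
  calc a r ≤ (ε / 2 + (1 / 2) ^ r * E) / s := (le_div_iff₀' hs).mpr hra
    _ = ε / (2 * s) + (1 / 2) ^ r * s := by rw [← hsE]; field_simp
end

section
/- Let E > 0 and ε > 0 be real numbers, let (a_r) and (b_r) be sequences of real numbers satisfying a₀ ≤ ε/(4√E) + ((2+√2)/4)·√E, b₀ ≤ ε/4 + ((2+√2)/4)·E, and for all r ∈ ℕ, a_{r+1} ≤ ε/(4√E) + (1/4)·(a_r + b_r/√E) and b_{r+1} ≤ ε/4 + (1/4)·(√E·a_r + b_r). Then for every natural number R with 2^R ≥ 2E/ε, one has a_R ≤ ε/√E and b_R ≤ ε. -/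
/-- Conclusion of the iterative algorithm's accuracy theorem: under the same recursive
error bounds, after `R` iterations with `2^R ≥ 2E/ε`, the mean errors satisfy
`a R ≤ ε/√E` and the covariance errors satisfy `b R ≤ ε`. -/
theorem iterative_algorithm_accuracy (E ε : ℝ) (hE : 0 < E) (hε : 0 < ε) (a b : ℕ → ℝ)
    (ha0 : a 0 ≤ ε / (4 * Real.sqrt E) + ((2 + Real.sqrt 2) / 4) * Real.sqrt E)
    (hb0 : b 0 ≤ ε / 4 + ((2 + Real.sqrt 2) / 4) * E)
    (ha : ∀ r : ℕ, a (r + 1) ≤ ε / (4 * Real.sqrt E) + (1 / 4) * (a r + b r / Real.sqrt E))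
    (hb : ∀ r : ℕ, b (r + 1) ≤ ε / 4 + (1 / 4) * (Real.sqrt E * a r + b r)) :
    ∀ R : ℕ, 2 * E / ε ≤ (2 : ℝ) ^ R → a R ≤ ε / Real.sqrt E ∧ b R ≤ ε := by
  have hsE : 0 < Real.sqrt E := Real.sqrt_pos.mpr hE
  have hEsq : Real.sqrt E * Real.sqrt E = E := Real.mul_self_sqrt hE.le
  set c : ℝ := (2 + Real.sqrt 2) / 4 with hc
  have hs2 : Real.sqrt 2 ≤ 2 := by
    nlinarith [Real.sq_sqrt (show (0:ℝ) ≤ 2 by norm_num), Real.sqrt_nonneg 2]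
  have hc0 : 0 ≤ c := by
    have := Real.sqrt_nonneg 2; rw [hc]; linarith
  have hc1 : c ≤ 1 := by rw [hc]; linarith
  have hdiv1 : Real.sqrt E * (ε / (4 * Real.sqrt E)) = ε / 4 := by
    field_simp
  have hdiv2 : ∀ x : ℝ, Real.sqrt E * (x / Real.sqrt E) = x := by
    intro x; field_simp
  have key : ∀ r : ℕ, Real.sqrt E * a r ≤ ε / 2 + c * E / 2 ^ r ∧
      b r ≤ ε / 2 + c * E / 2 ^ r := by
    intro r
    induction r with
    | zero =>
      constructor
      · have h := mul_le_mul_of_nonneg_left ha0 hsE.le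
        rw [mul_add, hdiv1] at h
        nlinarith
      · simpa using hb0.trans (by linarith)
    | succ r ih =>
      obtain ⟨h1, h2⟩ := ih
      have hp : (0:ℝ) < 2 ^ r := by positivity
      have hpow : c * E / 2 ^ (r + 1) = c * E / 2 ^ r / 2 := by
        rw [pow_succ]; ring
      constructor
      · have heq : Real.sqrt E * (ε / (4 * Real.sqrt E) + 1 / 4 * (a r + b r / Real.sqrt E)) =
            ε / 4 + 1 / 4 * (Real.sqrt E * a r + b r) := by
          field_simp
        have h := mul_le_mul_of_nonneg_left (ha r) hsE.le
        rw [heq] at h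
        rw [hpow]
        linarith
      · have h := hb r
        rw [hpow]
        linarith
  intro R hR
  obtain ⟨h1, h2⟩ := key R
  have hp : (0:ℝ) < 2 ^ R := by positivity
  have h2E : 2 * E ≤ ε * 2 ^ R := by
    have := (div_le_iff₀ hε).mp hR
    linarith [this]
  have hE2 : E / 2 ^ R ≤ ε / 2 := by
    rw [div_le_div_iff₀ hp (by norm_num : (0:ℝ) < 2)]
    nlinarith
  have hcb : c * E / 2 ^ R ≤ ε / 2 := by
    have hEp : 0 ≤ E / 2 ^ R := by positivity
    calc c * E / 2 ^ R = c * (E / 2 ^ R) := by ring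
      _ ≤ 1 * (ε / 2) := by
          apply mul_le_mul hc1 hE2 hEp (by norm_num)
      _ = ε / 2 := by ring
  refine ⟨?_, by linarith⟩
  rw [le_div_iff₀ hsE]
  nlinarith
end
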